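/- For a binary mask m ∈ {0,1}^d with exactly k nonzero entries, a fixed vector g ∈ ℝ^d with ‖m ⊙ g‖² = c‖g‖², and z̄ = m ⊙ z with z ~ N(0, I_d), the expected squared norm E[‖(z̄ᵀg) z̄‖²] equals (k + 2) c ‖g‖². -/

import Mathlib

/-!
Expanding the square turns the integrand into a combination of the monomials
`z l * z l' * z i ^ 2`. Under the product measure their expectations factor into one-dimensional
Gaussian moments, and since odd moments vanish, `E z² = 1` and `E z⁴ = 3`, one gets
`E[z l * z l' * z i ^ 2] = δ(l, l') (1 + 2 δ(l, i))`. Hence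
`E[(a ⬝ z)² ∑ bᵢ zᵢ²] = (∑ bᵢ) ‖a‖² + 2 ∑ bᵢ aᵢ²`, and for `a = m ⊙ g`, `b = m ⊙ m` the two
terms are `k c ‖g‖²` and `2 c ‖g‖²`. The moments themselves come from Stein's identity
`E[x ^ (n + 2)] = (n + 1) v E[x ^ n]`, i.e. integration by parts against the Gaussian density.
-/

open MeasureTheory ProbabilityTheory
open scoped NNReal Nat

lemma integrable_gaussianReal_iff {E : Type*} [NormedAddCommGroup E] [NormedSpace ℝ E]
    {μ : ℝ} {v : ℝ≥0} (hv : v ≠ 0) {f : ℝ → E} :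
    Integrable f (gaussianReal μ v) ↔ Integrable fun x ↦ gaussianPDFReal μ v x • f x := by
  rw [gaussianReal_of_var_ne_zero _ hv, integrable_withDensity_iff_integrable_smul'
    (measurable_gaussianPDF μ v) (ae_of_all _ fun _ ↦ gaussianPDF_lt_top)]
  simp_rw [toReal_gaussianPDF]

lemma integrable_pow_gaussianReal (μ : ℝ) (v : ℝ≥0) (n : ℕ) :
    Integrable (fun x ↦ x ^ n) (gaussianReal μ v) :=
  integrable_pow_of_mem_interior_integrableExpSet (by simp) n

lemma hasDerivAt_gaussianPDFReal (μ : ℝ) {v : ℝ≥0} (hv : v ≠ 0) (x : ℝ) :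
    HasDerivAt (gaussianPDFReal μ v) (-((x - μ) / v) * gaussianPDFReal μ v x) x := by
  have hv' : (v : ℝ) ≠ 0 := by exact_mod_cast hv
  have h : HasDerivAt (fun y ↦ -(y - μ) ^ 2 / (2 * v)) (-((x - μ) / v)) x :=
    ((((hasDerivAt_id x).sub_const μ).pow 2).neg.div_const _).congr_deriv (by field_simp; simp)
  rw [gaussianPDFReal_def]
  exact (h.exp.const_mul _).congr_deriv (by ring)

lemma integral_pow_add_two_gaussianReal (v : ℝ≥0) (n : ℕ) :
    ∫ x, x ^ (n + 2) ∂gaussianReal 0 v = (n + 1) * v * ∫ x, x ^ n ∂gaussianReal 0 v := by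
  rcases eq_or_ne v 0 with rfl | hv
  · simp [gaussianReal_zero_var]
  set ρ := gaussianPDFReal 0 v
  have hint (k : ℕ) (c : ℝ) : Integrable fun x ↦ c * (ρ x * x ^ k) :=
    ((integrable_gaussianReal_iff hv).1 (integrable_pow_gaussianReal 0 v k)).const_mul c
  have hparts := integral_mul_deriv_eq_deriv_mul_of_integrable
    (u := fun x ↦ x ^ (n + 1)) (u' := fun x ↦ (n + 1) * x ^ n)
    (fun x _ ↦ by simpa using hasDerivAt_pow (n + 1) x)
    (fun x _ ↦ hasDerivAt_gaussianPDFReal 0 hv x)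
    ((hint (n + 2) (-(v : ℝ)⁻¹)).congr (ae_of_all _ fun x ↦ by simp; ring))
    ((hint n (n + 1)).congr (ae_of_all _ fun x ↦ by simp; ring))
    ((hint (n + 1) 1).congr (ae_of_all _ fun x ↦ by simp; ring))
  have hv' : (v : ℝ) ≠ 0 := by exact_mod_cast hv
  calc ∫ x, x ^ (n + 2) ∂gaussianReal 0 v
      = -v * ∫ x, x ^ (n + 1) * (-((x - 0) / v) * ρ x) := by
        rw [integral_gaussianReal_eq_integral_smul hv, ← integral_const_mul]
        congr 1 with x
        field_simp
        simp; ring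
    _ = (n + 1) * v * ∫ x, x ^ n ∂gaussianReal 0 v := by
        rw [hparts, neg_mul_neg, integral_gaussianReal_eq_integral_smul hv,
          ← integral_const_mul, ← integral_const_mul]
        congr 1 with x
        simp; ring

lemma integral_pow_odd_gaussianReal (v : ℝ≥0) {n : ℕ} (hn : Odd n) :
    ∫ x, x ^ n ∂gaussianReal 0 v = 0 := by
  obtain ⟨k, rfl⟩ := hn
  induction k with
  | zero => simp
  | succ k ih => rw [show 2 * (k + 1) + 1 = 2 * k + 1 + 2 by ring,
      integral_pow_add_two_gaussianReal, ih, mul_zero]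

lemma integral_pow_even_gaussianReal (v : ℝ≥0) (n : ℕ) :
    ∫ x, x ^ (2 * n) ∂gaussianReal 0 v = v ^ n * (2 * n - 1)‼ := by
  induction n with
  | zero => simp
  | succ n ih =>
    rw [show 2 * (n + 1) = 2 * n + 2 by ring, integral_pow_add_two_gaussianReal, ih,
      show 2 * n + 2 - 1 = 2 * n + 1 by omega, Nat.doubleFactorial_add_one]
    push_cast
    ring

section StandardGaussianVector

variable {ι : Type*} [Fintype ι]

lemma mul_mul_sq_eq_prod_pow [DecidableEq ι] (z : ι → ℝ) (l l' i : ι) :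
    z l * z l' * z i ^ 2 = ∏ j, z j ^
      ((if j = l then 1 else 0) + (if j = l' then 1 else 0) + (if j = i then 2 else 0)) := by
  simp only [pow_add, Finset.prod_mul_distrib, pow_ite, pow_zero, Finset.prod_ite_eq',
    Finset.mem_univ, if_true, pow_one]

lemma integrable_mul_mul_sq_pi_gaussianReal (l l' i : ι) :
    Integrable (fun z : ι → ℝ ↦ z l * z l' * z i ^ 2)
      (Measure.pi fun _ : ι ↦ gaussianReal 0 1) := by
  classical
  simp_rw [mul_mul_sq_eq_prod_pow]
  exact Integrable.fintype_prod fun j ↦ integrable_pow_gaussianReal 0 1 _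

lemma integral_mul_mul_sq_pi_gaussianReal [DecidableEq ι] (l l' i : ι) :
    ∫ z, z l * z l' * z i ^ 2 ∂(Measure.pi fun _ : ι ↦ gaussianReal 0 1) =
      if l = l' then (if l = i then 3 else 1) else 0 := by
  simp_rw [mul_mul_sq_eq_prod_pow]
  rw [integral_fintype_prod_eq_prod (fun j (x : ℝ) ↦ x ^
    ((if j = l then 1 else 0) + (if j = l' then 1 else 0) + (if j = i then 2 else 0)))]
  have h2 : ∫ x, x ^ 2 ∂gaussianReal 0 1 = 1 := by
    simpa using integral_pow_even_gaussianReal 1 1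
  have h4 : ∫ x, x ^ 4 ∂gaussianReal 0 1 = 3 := by
    simpa [Nat.doubleFactorial] using integral_pow_even_gaussianReal 1 2
  split_ifs with hll hli
  · subst hll hli
    rw [Finset.prod_eq_single l (fun j _ hj ↦ by simp [hj]) (by simp)]
    simpa using h4
  · subst hll
    refine Finset.prod_eq_one fun j _ ↦ ?_
    by_cases hjl : j = l
    · subst hjl; simpa [hli] using h2
    · by_cases hji : j = i
      · subst hji; simpa [hjl] using h2
      · simp [hjl, hji]
  · -- the exponent of `z l` is odd
    refine Finset.prod_eq_zero (Finset.mem_univ l) (integral_pow_odd_gaussianReal 1 ?_)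
    by_cases hli : l = i
    · subst hli; simp [hll, Nat.odd_iff]
    · simp [hll, hli]

lemma integral_sq_sum_mul_sum_mul_sq_pi_gaussianReal (a b : ι → ℝ) :
    ∫ z, (∑ l, a l * z l) ^ 2 * ∑ i, b i * z i ^ 2
        ∂(Measure.pi fun _ : ι ↦ gaussianReal 0 1) =
      (∑ i, b i) * ∑ l, a l ^ 2 + 2 * ∑ i, b i * a i ^ 2 := by
  classical
  have hexpand (z : ι → ℝ) : (∑ l, a l * z l) ^ 2 * ∑ i, b i * z i ^ 2 =
      ∑ i, ∑ l, ∑ l', a l * a l' * b i * (z l * z l' * z i ^ 2) := by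
    rw [sq, Finset.sum_mul_sum, Finset.mul_sum]
    simp_rw [Finset.sum_mul]
    exact Finset.sum_congr rfl fun i _ ↦ Finset.sum_congr rfl fun l _ ↦
      Finset.sum_congr rfl fun l' _ ↦ by ring
  have hint (i l l' : ι) :=
    (integrable_mul_mul_sq_pi_gaussianReal l l' i).const_mul (a l * a l' * b i)
  have hint₂ (i l : ι) := integrable_finsetSum Finset.univ fun l' _ ↦ hint i l l'
  simp_rw [hexpand]
  rw [integral_finsetSum _ fun i _ ↦ integrable_finsetSum _ fun l _ ↦ hint₂ i l]
  simp_rw [integral_finsetSum _ fun l _ ↦ hint₂ _ l,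
    integral_finsetSum _ fun l' _ ↦ hint _ _ l', integral_const_mul,
    integral_mul_mul_sq_pi_gaussianReal]
  have hdiag (l i : ι) :
      ∑ l', a l * a l' * b i * (if l = l' then (if l = i then 3 else 1) else 0) =
        b i * a l ^ 2 + if l = i then 2 * (b i * a i ^ 2) else 0 := by
    rw [Finset.sum_eq_single_of_mem l (Finset.mem_univ l) fun l' _ hl' ↦ by simp [Ne.symm hl']]
    rw [if_pos rfl]
    split_ifs with hli
    · subst hli; ring
    · ring
  simp only [hdiag, Finset.sum_add_distrib, Finset.sum_ite_eq', Finset.mem_univ, if_true,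
    ← Finset.mul_sum, ← Finset.sum_mul]

end StandardGaussianVector

lemma sum_eq_card_filter_eq_one {ι : Type*} [Fintype ι] {m : ι → ℝ}
    (hm : ∀ i, m i = 0 ∨ m i = 1) :
    ∑ i, m i = (Finset.univ.filter fun i ↦ m i = 1).card := by
  rw [Finset.natCast_card_filter]
  refine Finset.sum_congr rfl fun i _ ↦ ?_
  rcases hm i with h | h <;> simp [h]

/-- For a binary mask `m ∈ {0,1}^d` with exactly `k` ones, `g ∈ ℝ^d` with
`‖m ⊙ g‖² = c ‖g‖²`, and `z̄ = m ⊙ z` with `z ~ N(0, I_d)`,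
`E[‖(z̄ᵀg) z̄‖²] = (k + 2) c ‖g‖²`. -/
theorem masked_gaussian_gradient_norm (d k : ℕ) (m g : Fin d → ℝ) (c : ℝ)
    (hm : ∀ i, m i = 0 ∨ m i = 1)
    (hk : (Finset.univ.filter fun i => m i = 1).card = k)
    (hc : (∑ i, (m i * g i) ^ 2) = c * (∑ i, g i ^ 2)) :
    (∫ z : Fin d → ℝ,
        (∑ l, (m l * z l) * g l) ^ 2 * (∑ i, (m i * z i) ^ 2)
        ∂(Measure.pi fun _ : Fin d => gaussianReal 0 1)) =
      ((k : ℝ) + 2) * c * (∑ i, g i ^ 2) := by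
  have hcard : ∑ i, m i ^ 2 = k := by
    rw [← hk, ← sum_eq_card_filter_eq_one hm]
    exact Finset.sum_congr rfl fun i _ ↦ by rcases hm i with h | h <;> simp [h]
  have hweight (i : Fin d) : m i ^ 2 * (m i * g i) ^ 2 = (m i * g i) ^ 2 := by
    rcases hm i with h | h <;> simp [h]
  calc (∫ z : Fin d → ℝ, (∑ l, (m l * z l) * g l) ^ 2 * (∑ i, (m i * z i) ^ 2)
        ∂(Measure.pi fun _ : Fin d => gaussianReal 0 1))
      = ∫ z, (∑ l, (m l * g l) * z l) ^ 2 * ∑ i, m i ^ 2 * z i ^ 2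
          ∂(Measure.pi fun _ : Fin d => gaussianReal 0 1) := by
        congr 1 with z
        congr 1
        · congr 1
          exact Finset.sum_congr rfl fun l _ ↦ by ring
        · exact Finset.sum_congr rfl fun i _ ↦ by ring
    _ = (∑ i, m i ^ 2) * ∑ l, (m l * g l) ^ 2 + 2 * ∑ i, m i ^ 2 * (m i * g i) ^ 2 :=
        integral_sq_sum_mul_sum_mul_sq_pi_gaussianReal _ _
    _ = ((k : ℝ) + 2) * c * (∑ i, g i ^ 2) := by
        rw [hcard, Finset.sum_congr rfl fun i _ ↦ hweight i, hc]
        ring
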